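/- arXiv:1908.01634 — 2 statements merged into one kernel-verified Lean document; each statement's English description precedes it below -/
import Mathlib

section
/- The L_p dual Minkowski inequality: for star bodies K, L in R^n and p > 0, the quantity Ṽ_{-p}(K,L) := (1/n)∫_{S^{n-1}} rho(K,u)^{n+p} rho(L,u)^{-p} du satisfies Ṽ_{-p}(K,L) ≥ V_n(K)^{(n+p)/n} V_n(L)^{-p/n}, with equality if and only if K and L are dilates of each other. -/
open MeasureTheory
open scoped RealInnerProductSpace

section DualMinkowskiHelpers
open MeasureTheory Metric Set Finset

noncomputable section

lemma haar_aux (k : ℕ) : (μH[(k:ℝ)] : Measure (EuclideanSpace ℝ (Fin k))).IsAddHaarMeasure := by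
  have h := MeasureTheory.isAddHaarMeasure_hausdorffMeasure (E := EuclideanSpace ℝ (Fin k))
  rwa [finrank_euclideanSpace_fin] at h

lemma sum_sq_eq {k : ℕ} (x : EuclideanSpace ℝ (Fin k)) : ∑ i, x i ^ 2 = ‖x‖ ^ 2 := by
  rw [EuclideanSpace.norm_eq, Real.sq_sqrt (by positivity)]
  simp [Real.norm_eq_abs, sq_abs]

def hmap {m : ℕ} (i : Fin (m+1)) (c : ℝ) (y : EuclideanSpace ℝ (Fin m)) :
    EuclideanSpace ℝ (Fin (m+1)) :=
  WithLp.toLp 2 (Fin.insertNth i (c * Real.sqrt (1 - ‖y‖^2)) y.ofLp)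

lemma dist_hmap_sq {m : ℕ} (i : Fin (m+1)) (c : ℝ) (y z : EuclideanSpace ℝ (Fin m)) :
    dist (hmap i c y) (hmap i c z) ^ 2
      = (c * Real.sqrt (1 - ‖y‖^2) - c * Real.sqrt (1 - ‖z‖^2))^2 + dist y z ^ 2 := by
  rw [EuclideanSpace.dist_eq, EuclideanSpace.dist_eq, Real.sq_sqrt (by positivity),
    Real.sq_sqrt (by positivity), Fin.sum_univ_succAbove _ i]
  simp [hmap, Real.dist_eq]

lemma norm_hmap {m : ℕ} (i : Fin (m+1)) {c : ℝ} (hc : c^2 = 1)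
    {y : EuclideanSpace ℝ (Fin m)} (hy : ‖y‖ ≤ 1) : ‖hmap i c y‖ = 1 := by
  have h2 : ‖hmap i c y‖ ^ 2 = 1 := by
    rw [← sum_sq_eq, Fin.sum_univ_succAbove _ i]
    have h1 : (hmap i c y) i = c * Real.sqrt (1 - ‖y‖^2) := by
      simp [hmap]
    have h3 : ∀ j : Fin m, hmap i c y (i.succAbove j) = y j := fun j => by
      simp [hmap]
    rw [h1]
    simp only [h3]
    rw [sum_sq_eq, mul_pow, hc, one_mul, Real.sq_sqrt (by nlinarith [norm_nonneg y])]
    ring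
  nlinarith [norm_nonneg (hmap i c y)]

def pmap {m : ℕ} (i : Fin (m+1)) (x : EuclideanSpace ℝ (Fin (m+1))) :
    EuclideanSpace ℝ (Fin m) := WithLp.toLp 2 (fun j => x (i.succAbove j))

lemma removeNth_hmap {m : ℕ} (i : Fin (m+1)) (c : ℝ) (y : EuclideanSpace ℝ (Fin m)) :
    pmap i (hmap i c y) = y := by
  ext j
  simp [hmap, pmap]

lemma removeNth_lipschitz {m : ℕ} (i : Fin (m+1)) :
    LipschitzWith 1 (pmap (m := m) i) := by
  apply LipschitzWith.of_dist_le_mul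
  intro x z
  simp only [NNReal.coe_one, one_mul]
  rw [EuclideanSpace.dist_eq, EuclideanSpace.dist_eq]
  apply Real.sqrt_le_sqrt
  rw [Fin.sum_univ_succAbove _ i]
  have h : ∀ j : Fin m, dist (pmap i x j) (pmap i z j) ^ 2
      = dist (x (i.succAbove j)) (z (i.succAbove j)) ^2 := fun j => rfl
  simp only [h]
  have := sq_nonneg (dist (x i) (z i))
  linarith

lemma le_smul_of_mul_le {s d t T : ℝ} (hs : 0 < s) (hd0 : 0 ≤ d) (hT : 2/s ≤ T)
    (htT : t * T ≤ 2 * d) : t ≤ s * d := by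
  by_contra hcon
  push_neg at hcon
  have h0 : (0:ℝ) < 2/s := by positivity
  have h1 : (s*d)*(2/s) < t*T :=
    mul_lt_mul hcon hT h0 (le_trans (by positivity) hcon.le)
  have h2 : (s*d)*(2/s) = 2*d := by field_simp
  linarith

lemma sqrt_diff_le {a b d s : ℝ} (hs : 0 < s) (ha : 1/s^2 ≤ a) (hb : 1/s^2 ≤ b)
    (hd : |a - b| ≤ 2 * d) : |Real.sqrt a - Real.sqrt b| ≤ s * d := by
  have ha0 : (0:ℝ) ≤ a := le_trans (by positivity) ha
  have hb0 : (0:ℝ) ≤ b := le_trans (by positivity) hb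
  have hsa : 1/s ≤ Real.sqrt a := by
    have h := Real.sqrt_le_sqrt ha
    rwa [show (1:ℝ)/s^2 = (1/s)^2 by ring, Real.sqrt_sq (by positivity)] at h
  have hsb : 1/s ≤ Real.sqrt b := by
    have h := Real.sqrt_le_sqrt hb
    rwa [show (1:ℝ)/s^2 = (1/s)^2 by ring, Real.sqrt_sq (by positivity)] at h
  have hmul : (Real.sqrt a - Real.sqrt b) * (Real.sqrt a + Real.sqrt b) = a - b := by
    nlinarith [Real.sq_sqrt ha0, Real.sq_sqrt hb0]
  have hd0 : 0 ≤ d := by have := abs_nonneg (a - b); linarith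
  have hs' : 0 < 1/s := by positivity
  rw [abs_le] at hd ⊢
  have hT : 2/s ≤ Real.sqrt a + Real.sqrt b := by
    rw [div_le_iff₀ hs] at hsa hsb ⊢
    rw [add_mul]; linarith
  constructor
  · have h := le_smul_of_mul_le hs hd0 hT
      (t := Real.sqrt b - Real.sqrt a) (by nlinarith [hmul, hd.1])
    linarith
  · exact le_smul_of_mul_le hs hd0 hT (by rw [hmul]; exact hd.2)

lemma sq_norm_sub_le {k : ℕ} {y z : EuclideanSpace ℝ (Fin k)} (hy : ‖y‖ ≤ 1) (hz : ‖z‖ ≤ 1) :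
    |(1 - ‖y‖^2) - (1 - ‖z‖^2)| ≤ 2 * dist y z := by
  have h1 : |‖y‖ - ‖z‖| ≤ dist y z := by
    rw [dist_eq_norm]; exact abs_norm_sub_norm_le y z
  have h2 : (0:ℝ) ≤ ‖y‖ := norm_nonneg y
  have h3 : (0:ℝ) ≤ ‖z‖ := norm_nonneg z
  rw [abs_le] at h1 ⊢
  constructor <;> nlinarith [h1.1, h1.2, dist_nonneg (x := y) (y := z)]

set_option maxHeartbeats 1000000 in
lemma hmap_lipschitz {m : ℕ} (i : Fin (m+1)) {c : ℝ} (hc : c^2 = 1) :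
    LipschitzOnWith (Real.toNNReal (Real.sqrt (2*(m:ℝ)+3))) (hmap i c)
      (closedBall (0 : EuclideanSpace ℝ (Fin m)) (Real.sqrt (1 - 1/(2*((m:ℝ)+1))))) := by
  rw [lipschitzOnWith_iff_dist_le_mul]
  intro y hy z hz
  have hm1 : (0:ℝ) < (m:ℝ) + 1 := by positivity
  have hfrac : 1/(2*((m:ℝ)+1)) ≤ 1 := by
    rw [div_le_one (by positivity)]; nlinarith
  have hr2 : Real.sqrt (1 - 1/(2*((m:ℝ)+1))) ^ 2 = 1 - 1/(2*((m:ℝ)+1)) :=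
    Real.sq_sqrt (by linarith)
  have hy' : ‖y‖ ≤ Real.sqrt (1 - 1/(2*((m:ℝ)+1))) := by
    simpa using mem_closedBall_iff_norm.1 hy
  have hz' : ‖z‖ ≤ Real.sqrt (1 - 1/(2*((m:ℝ)+1))) := by
    simpa using mem_closedBall_iff_norm.1 hz
  have hrle : Real.sqrt (1 - 1/(2*((m:ℝ)+1))) ≤ 1 := Real.sqrt_le_one.2 (by
    have hh : (0:ℝ) < 1/(2*((m:ℝ)+1)) := by positivity
    linarith)
  have hy1 : ‖y‖ ≤ 1 := hy'.trans hrle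
  have hz1 : ‖z‖ ≤ 1 := hz'.trans hrle
  have hyn : (0:ℝ) ≤ ‖y‖ := norm_nonneg _
  have hzn : (0:ℝ) ≤ ‖z‖ := norm_nonneg _
  set s : ℝ := Real.sqrt (2*((m:ℝ)+1)) with hs_def
  have hs : 0 < s := Real.sqrt_pos.2 (by positivity)
  have hs2 : s^2 = 2*((m:ℝ)+1) := Real.sq_sqrt (by positivity)
  have hay : 1/s^2 ≤ 1 - ‖y‖^2 := by
    rw [hs2]
    nlinarith [hy', hr2, Real.sqrt_nonneg (1 - 1/(2*((m:ℝ)+1)))]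
  have haz : 1/s^2 ≤ 1 - ‖z‖^2 := by
    rw [hs2]
    nlinarith [hz', hr2, Real.sqrt_nonneg (1 - 1/(2*((m:ℝ)+1)))]
  have key : |Real.sqrt (1 - ‖y‖^2) - Real.sqrt (1 - ‖z‖^2)| ≤ s * dist y z :=
    sqrt_diff_le hs hay haz (sq_norm_sub_le hy1 hz1)
  have habs : |c| = 1 := by
    have := abs_pow c 2; rw [hc] at this; nlinarith [abs_nonneg c, sq_abs c]
  have hC0 : (0:ℝ) ≤ Real.sqrt (2*(m:ℝ)+3) := Real.sqrt_nonneg _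
  rw [Real.coe_toNNReal _ hC0]
  have hsq : dist (hmap i c y) (hmap i c z) ^ 2 ≤ (Real.sqrt (2*(m:ℝ)+3) * dist y z)^2 := by
    rw [dist_hmap_sq]
    have h1 : (c * Real.sqrt (1 - ‖y‖^2) - c * Real.sqrt (1 - ‖z‖^2))^2
        = c^2 * (Real.sqrt (1 - ‖y‖^2) - Real.sqrt (1 - ‖z‖^2))^2 := by ring
    have h2 : (Real.sqrt (1 - ‖y‖^2) - Real.sqrt (1 - ‖z‖^2))^2 ≤ (s * dist y z)^2 := by
      nlinarith [abs_nonneg (Real.sqrt (1 - ‖y‖^2) - Real.sqrt (1 - ‖z‖^2)), key,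
        sq_abs (Real.sqrt (1 - ‖y‖^2) - Real.sqrt (1 - ‖z‖^2))]
    have h3 : Real.sqrt (2*(m:ℝ)+3) ^ 2 = 2*(m:ℝ)+3 := Real.sq_sqrt (by positivity)
    have hd0 : (0:ℝ) ≤ dist y z := dist_nonneg
    rw [h1, hc, one_mul]
    nlinarith [h2, hs2, hd0]
  have h4 : (0:ℝ) ≤ dist (hmap i c y) (hmap i c z) := dist_nonneg
  exact (pow_le_pow_iff_left₀ h4 (mul_nonneg hC0 dist_nonneg) (by norm_num)).1 hsq

lemma exists_big_coord {m : ℕ} {u : EuclideanSpace ℝ (Fin (m+1))}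
    (hu : ‖u‖ = 1) : ∃ i, 1/((m:ℝ)+1) ≤ u i ^ 2 := by
  by_contra hcon
  push_neg at hcon
  have hsum : ∑ i, u i ^ 2 = 1 := by rw [sum_sq_eq, hu]; norm_num
  have hlt : ∑ i, u i ^ 2 < ∑ _i : Fin (m+1), 1/((m:ℝ)+1) :=
    Finset.sum_lt_sum_of_nonempty ⟨0, Finset.mem_univ 0⟩ (fun j _ => hcon j)
  rw [Finset.sum_const, Finset.card_univ, Fintype.card_fin, nsmul_eq_mul] at hlt
  rw [hsum] at hlt
  have : ((m:ℝ)+1) * (1/((m:ℝ)+1)) = 1 := by field_simp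
  push_cast at hlt
  linarith [this, hlt]

lemma hmap_eq_self {m : ℕ} {u : EuclideanSpace ℝ (Fin (m+1))} (hu : ‖u‖ = 1)
    {i : Fin (m+1)} :
    ‖pmap i u‖^2 = 1 - u i ^ 2 ∧
    hmap i (if 0 ≤ u i then (1:ℝ) else -1) (pmap i u) = u := by
  have hy : ‖pmap i u‖^2 = 1 - u i ^ 2 := by
    rw [← sum_sq_eq]
    have hsum : ∑ j, u j ^ 2 = 1 := by rw [sum_sq_eq, hu]; norm_num
    rw [Fin.sum_univ_succAbove (fun j => u j ^ 2) i] at hsum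
    have : ∀ j : Fin m, pmap i u j ^ 2 = u (i.succAbove j) ^ 2 := fun j => rfl
    simp only [this]
    linarith
  refine ⟨hy, ?_⟩
  have hsq : Real.sqrt (1 - ‖pmap i u‖^2) = |u i| := by
    rw [hy]
    rw [show (1 : ℝ) - (1 - u i ^2) = u i ^2 by ring, Real.sqrt_sq_eq_abs]
  have hcoord : (if 0 ≤ u i then (1:ℝ) else -1) * Real.sqrt (1 - ‖pmap i u‖^2) = u i := by
    rw [hsq]
    by_cases h : 0 ≤ u i
    · simp [h, abs_of_nonneg h]
    · push_neg at h
      simp [not_le.2 h, abs_of_neg h]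
  show WithLp.toLp 2 (Fin.insertNth i _ _) = u
  rw [hcoord]
  exact congrArg (WithLp.toLp 2) (Fin.insertNth_self_removeNth i u.ofLp)

lemma sphere_subset_cover {m : ℕ} :
    Metric.sphere (0 : EuclideanSpace ℝ (Fin (m+1))) 1 ⊆
      ⋃ (i : Fin (m+1)), ⋃ (b : Bool),
        hmap i (if b then (1:ℝ) else -1) ''
          closedBall (0 : EuclideanSpace ℝ (Fin m)) (Real.sqrt (1 - 1/(2*((m:ℝ)+1)))) := by
  intro u hu
  have hu' : ‖u‖ = 1 := by simpa using mem_sphere_zero_iff_norm.1 hu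
  obtain ⟨i, hi⟩ := exists_big_coord hu'
  obtain ⟨hy, heq⟩ := hmap_eq_self hu' (i := i)
  refine Set.mem_iUnion.2 ⟨i, Set.mem_iUnion.2 ⟨decide (0 ≤ u i), ?_⟩⟩
  have hb : (if decide (0 ≤ u i) then (1:ℝ) else -1) = (if 0 ≤ u i then (1:ℝ) else -1) := by
    by_cases h : 0 ≤ u i <;> simp [h]
  rw [hb]
  refine ⟨pmap i u, ?_, heq⟩
  rw [mem_closedBall_iff_norm, sub_zero]
  have h1 : ‖pmap i u‖^2 ≤ 1 - 1/(2*((m:ℝ)+1)) := by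
    rw [hy]
    have : 1/(2*((m:ℝ)+1)) ≤ 1/((m:ℝ)+1) := by
      apply div_le_div_of_nonneg_left (by norm_num) (by positivity) (by nlinarith)
    linarith
  calc ‖pmap i u‖ = Real.sqrt (‖pmap i u‖^2) := (Real.sqrt_sq (norm_nonneg _)).symm
    _ ≤ Real.sqrt (1 - 1/(2*((m:ℝ)+1))) := Real.sqrt_le_sqrt h1

lemma if_sq {b : Bool} : ((if b then (1:ℝ) else -1))^2 = 1 := by cases b <;> norm_num

lemma sphere_muH_lt_top (m : ℕ) :
    μH[(m:ℝ)] (Metric.sphere (0 : EuclideanSpace ℝ (Fin (m+1))) 1) < ⊤ := by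
  haveI := haar_aux m
  have hD : IsCompact (closedBall (0 : EuclideanSpace ℝ (Fin m))
      (Real.sqrt (1 - 1/(2*((m:ℝ)+1))))) := isCompact_closedBall _ _
  have hDfin : μH[(m:ℝ)] (closedBall (0 : EuclideanSpace ℝ (Fin m))
      (Real.sqrt (1 - 1/(2*((m:ℝ)+1))))) < ⊤ := hD.measure_lt_top
  calc μH[(m:ℝ)] (Metric.sphere (0 : EuclideanSpace ℝ (Fin (m+1))) 1)
      ≤ μH[(m:ℝ)] (⋃ (i : Fin (m+1)), ⋃ (b : Bool),
          hmap i (if b then (1:ℝ) else -1) ''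
            closedBall 0 (Real.sqrt (1 - 1/(2*((m:ℝ)+1))))) :=
        measure_mono sphere_subset_cover
    _ ≤ ∑ i : Fin (m+1), μH[(m:ℝ)] (⋃ (b : Bool),
          hmap i (if b then (1:ℝ) else -1) ''
            closedBall 0 (Real.sqrt (1 - 1/(2*((m:ℝ)+1))))) := measure_iUnion_fintype_le _ _
    _ < ⊤ := by
        apply ENNReal.sum_lt_top.2
        intro i _
        calc μH[(m:ℝ)] (⋃ (b : Bool), hmap i (if b then (1:ℝ) else -1) ''
              closedBall 0 (Real.sqrt (1 - 1/(2*((m:ℝ)+1)))))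
            ≤ ∑ b : Bool, μH[(m:ℝ)] (hmap i (if b then (1:ℝ) else -1) ''
              closedBall 0 (Real.sqrt (1 - 1/(2*((m:ℝ)+1))))) := measure_iUnion_fintype_le _ _
          _ < ⊤ := by
              apply ENNReal.sum_lt_top.2
              intro b _
              have hlip := hmap_lipschitz (m := m) i (c := if b then (1:ℝ) else -1) if_sq
              have := hlip.hausdorffMeasure_image_le (d := (m:ℝ)) (Nat.cast_nonneg m)
              apply lt_of_le_of_lt this
              exact ENNReal.mul_lt_top
                (ENNReal.rpow_lt_top_of_nonneg (Nat.cast_nonneg m) ENNReal.coe_ne_top) hDfin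

lemma sphere_inter_ball_pos (m : ℕ) {u : EuclideanSpace ℝ (Fin (m+1))}
    (hu : u ∈ Metric.sphere (0 : EuclideanSpace ℝ (Fin (m+1))) 1) {ε : ℝ} (hε : 0 < ε) :
    0 < μH[(m:ℝ)] (Metric.sphere (0 : EuclideanSpace ℝ (Fin (m+1))) 1 ∩ ball u ε) := by
  haveI := haar_aux m
  have hu' : ‖u‖ = 1 := by simpa using mem_sphere_zero_iff_norm.1 hu
  obtain ⟨i, hi⟩ := exists_big_coord hu'
  obtain ⟨hy, heq⟩ := hmap_eq_self hu' (i := i)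
  set c : ℝ := if 0 ≤ u i then (1:ℝ) else -1 with hc_def
  have hc : c^2 = 1 := by by_cases h : 0 ≤ u i <;> simp [hc_def, h]
  set r : ℝ := Real.sqrt (1 - 1/(2*((m:ℝ)+1))) with hr_def
  set y₀ : EuclideanSpace ℝ (Fin m) := pmap i u with hy₀_def
  set CK : ℝ := Real.sqrt (2*(m:ℝ)+3) with hCK_def
  have hCK : 0 < CK := Real.sqrt_pos.2 (by positivity)
  -- ‖y₀‖ < r
  have hm1 : (0:ℝ) < (m:ℝ) + 1 := by positivity
  have hr2 : r ^ 2 = 1 - 1/(2*((m:ℝ)+1)) := Real.sq_sqrt (by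
    have : 1/(2*((m:ℝ)+1)) ≤ 1 := by rw [div_le_one (by positivity)]; nlinarith
    linarith)
  have hy₀r : ‖y₀‖ < r := by
    have h1 : ‖y₀‖^2 < r^2 := by
      rw [hy, hr2]
      have : 1/(2*((m:ℝ)+1)) < 1/((m:ℝ)+1) := by
        apply div_lt_div_of_pos_left (by norm_num) (by positivity) (by nlinarith)
      linarith
    nlinarith [norm_nonneg y₀, Real.sqrt_nonneg (1 - 1/(2*((m:ℝ)+1)))]
  set δ : ℝ := min (r - ‖y₀‖) (ε / CK) with hδ_def
  have hδ : 0 < δ := lt_min (by linarith) (by positivity)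
  have hsub : ball y₀ δ ⊆ pmap i '' (Metric.sphere (0 : EuclideanSpace ℝ (Fin (m+1))) 1 ∩ ball u ε) := by
    intro y hy'
    have hyd : dist y y₀ < δ := mem_ball.1 hy'
    have hyD : y ∈ closedBall (0 : EuclideanSpace ℝ (Fin m)) r := by
      rw [mem_closedBall_iff_norm, sub_zero]
      calc ‖y‖ ≤ ‖y₀‖ + dist y y₀ := by
            rw [dist_eq_norm]; have := norm_add_le (y - y₀) y₀; simp at this; linarith
        _ ≤ ‖y₀‖ + δ := by linarith
        _ ≤ ‖y₀‖ + (r - ‖y₀‖) := by have := min_le_left (r - ‖y₀‖) (ε / CK); linarith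
        _ = r := by ring
    have hy₀D : y₀ ∈ closedBall (0 : EuclideanSpace ℝ (Fin m)) r := by
      rw [mem_closedBall_iff_norm, sub_zero]; linarith
    have hrle : r ≤ 1 := Real.sqrt_le_one.2 (by
      have hh : (0:ℝ) < 1/(2*((m:ℝ)+1)) := by positivity
      linarith)
    have hyn : ‖y‖ ≤ 1 := by
      have := mem_closedBall_iff_norm.1 hyD; rw [sub_zero] at this; linarith
    have hsphere : hmap i c y ∈ Metric.sphere (0 : EuclideanSpace ℝ (Fin (m+1))) 1 := by
      rw [mem_sphere_zero_iff_norm]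
      exact norm_hmap i hc hyn
    have hdist : dist (hmap i c y) u < ε := by
      have hlip := hmap_lipschitz (m := m) i hc
      rw [lipschitzOnWith_iff_dist_le_mul] at hlip
      have h2 := hlip y hyD y₀ hy₀D
      rw [Real.coe_toNNReal _ (Real.sqrt_nonneg _)] at h2
      have h3 : dist (hmap i c y) (hmap i c y₀) ≤ CK * dist y y₀ := h2
      have h4 : CK * dist y y₀ < CK * (ε / CK) := by
        apply mul_lt_mul_of_pos_left _ hCK
        exact lt_of_lt_of_le hyd (min_le_right _ _)
      have h5 : CK * (ε / CK) = ε := by field_simp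
      have heq' : hmap i c y₀ = u := heq
      rw [heq'] at h3
      linarith
    exact ⟨hmap i c y, ⟨hsphere, mem_ball.2 hdist⟩, removeNth_hmap i c y⟩
  have hball_pos : 0 < μH[(m:ℝ)] (ball y₀ δ) :=
    (isOpen_ball.measure_pos _ (nonempty_ball.2 hδ))
  have h1 : μH[(m:ℝ)] (ball y₀ δ) ≤
      μH[(m:ℝ)] (pmap i '' (Metric.sphere (0 : EuclideanSpace ℝ (Fin (m+1))) 1 ∩ ball u ε)) :=
    measure_mono hsub
  have h2 := (removeNth_lipschitz (m := m) i).hausdorffMeasure_image_le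
    (d := (m:ℝ)) (Nat.cast_nonneg m)
    (Metric.sphere (0 : EuclideanSpace ℝ (Fin (m+1))) 1 ∩ ball u ε)
  rw [ENNReal.coe_one, ENNReal.one_rpow, one_mul] at h2
  exact lt_of_lt_of_le (lt_of_lt_of_le hball_pos h1) h2

-- Analysis helpers
section Analysis
open Real

variable {m : ℕ}

local notation "S" => Metric.sphere (0 : EuclideanSpace ℝ (Fin (m+1))) 1

lemma sphere_meas : MeasurableSet (S : Set (EuclideanSpace ℝ (Fin (m+1)))) :=
  (Metric.isClosed_sphere).measurableSet

lemma integrableOn_sphere {f : EuclideanSpace ℝ (Fin (m+1)) → ℝ}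
    (hf : ContinuousOn f S) : IntegrableOn f S μH[(m:ℝ)] := by
  obtain ⟨M, hM⟩ := (isCompact_sphere (0 : EuclideanSpace ℝ (Fin (m+1))) 1).exists_bound_of_continuousOn hf
  refine ⟨hf.aestronglyMeasurable sphere_meas, ?_⟩
  apply MeasureTheory.HasFiniteIntegral.restrict_of_bounded (C := M) (sphere_muH_lt_top m)
  filter_upwards [MeasureTheory.ae_restrict_mem sphere_meas] with x hx
  exact hM x hx

lemma sphere_measure_pos : 0 < μH[(m:ℝ)] (S : Set (EuclideanSpace ℝ (Fin (m+1)))) := by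
  have hne : (S : Set (EuclideanSpace ℝ (Fin (m+1)))).Nonempty := by
    exact NormedSpace.sphere_nonempty.2 zero_le_one
  obtain ⟨u, hu⟩ := hne
  have := sphere_inter_ball_pos m hu (ε := 1) one_pos
  exact lt_of_lt_of_le this (measure_mono Set.inter_subset_left)

lemma integral_pos_sphere {f : EuclideanSpace ℝ (Fin (m+1)) → ℝ}
    (hf : ContinuousOn f S) (hpos : ∀ u ∈ S, 0 < f u) :
    0 < ∫ u in S, f u ∂μH[(m:ℝ)] := by
  obtain ⟨u₀, hu₀, hmin⟩ := (isCompact_sphere (0 : EuclideanSpace ℝ (Fin (m+1))) 1).exists_isMinOn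
    (NormedSpace.sphere_nonempty.2 zero_le_one) hf
  have hc : 0 < f u₀ := hpos u₀ hu₀
  have hmin' : ∀ x ∈ Metric.sphere (0 : EuclideanSpace ℝ (Fin (m+1))) 1, f u₀ ≤ f x :=
    fun x hx => hmin hx
  have h := MeasureTheory.setIntegral_ge_of_const_le sphere_meas (sphere_muH_lt_top m).ne
    (fun x hx => hmin' x hx) (integrableOn_sphere hf)
  have hμ : 0 < (μH[(m:ℝ)] (S : Set (EuclideanSpace ℝ (Fin (m+1))))).toReal :=
    ENNReal.toReal_pos sphere_measure_pos.ne' (sphere_muH_lt_top m).ne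
  calc (0:ℝ) < f u₀ * (μH[(m:ℝ)] (S : Set (EuclideanSpace ℝ (Fin (m+1))))).toReal := by positivity
    _ ≤ _ := by rw [mul_comm, ← smul_eq_mul, ← measureReal_def]; exact h

lemma eq_zero_of_integral_zero_sphere {f : EuclideanSpace ℝ (Fin (m+1)) → ℝ}
    (hf : ContinuousOn f S) (hnonneg : ∀ u ∈ S, 0 ≤ f u)
    (hint : ∫ u in S, f u ∂μH[(m:ℝ)] = 0) : ∀ u ∈ S, f u = 0 := by
  intro u hu
  by_contra hne
  have hfu : 0 < f u := lt_of_le_of_ne (hnonneg u hu) (Ne.symm hne)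
  have htend := hf u hu
  have hmem : {y | f u / 2 < f y} ∈ nhdsWithin u S :=
    htend (Ioi_mem_nhds (by linarith))
  rw [Metric.mem_nhdsWithin_iff] at hmem
  obtain ⟨ε, hε, hsub⟩ := hmem
  have hmeas : MeasurableSet ((S : Set (EuclideanSpace ℝ (Fin (m+1)))) ∩ Metric.ball u ε) :=
    sphere_meas.inter measurableSet_ball
  have hfinsub : μH[(m:ℝ)] ((S : Set (EuclideanSpace ℝ (Fin (m+1)))) ∩ Metric.ball u ε) ≠ ⊤ :=
    ((lt_of_le_of_lt (measure_mono Set.inter_subset_left) (sphere_muH_lt_top m))).ne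
  have hposμ := sphere_inter_ball_pos m hu hε
  have h1 : f u / 2 * (μH[(m:ℝ)] ((S : Set (EuclideanSpace ℝ (Fin (m+1)))) ∩ Metric.ball u ε)).toReal
      ≤ ∫ x in (S : Set (EuclideanSpace ℝ (Fin (m+1)))) ∩ Metric.ball u ε, f x ∂μH[(m:ℝ)] := by
    rw [mul_comm, ← smul_eq_mul, ← measureReal_def]
    apply MeasureTheory.setIntegral_ge_of_const_le hmeas hfinsub
    · intro x hx
      exact le_of_lt (hsub ⟨hx.2, hx.1⟩)
    · exact (integrableOn_sphere hf).mono_set Set.inter_subset_left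
  have h2 : ∫ x in (S : Set (EuclideanSpace ℝ (Fin (m+1)))) ∩ Metric.ball u ε, f x ∂μH[(m:ℝ)]
      ≤ ∫ x in S, f x ∂μH[(m:ℝ)] := by
    apply MeasureTheory.setIntegral_mono_set (integrableOn_sphere hf)
    · filter_upwards [MeasureTheory.ae_restrict_mem sphere_meas] with x hx
      exact hnonneg x hx
    · exact HasSubset.Subset.eventuallyLE Set.inter_subset_left
  have hμ : 0 < (μH[(m:ℝ)] ((S : Set (EuclideanSpace ℝ (Fin (m+1)))) ∩ Metric.ball u ε)).toReal :=
    ENNReal.toReal_pos hposμ.ne' hfinsub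
  have : (0:ℝ) < f u / 2 * (μH[(m:ℝ)] ((S : Set (EuclideanSpace ℝ (Fin (m+1)))) ∩ Metric.ball u ε)).toReal := by
    positivity
  linarith [hint ▸ (h1.trans h2)]

end Analysis

-- AM-GM with equality
lemma amgm_pair {a b t : ℝ} (ha : 0 < a) (hb : 0 < b) (ht : 0 < t) (ht1 : t < 1) :
    a ^ t * b ^ (1 - t) ≤ t * a + (1 - t) * b ∧
      (a ^ t * b ^ (1 - t) = t * a + (1 - t) * b → a = b) := by
  rcases eq_or_ne a b with rfl | hab
  · constructor
    · rw [← Real.rpow_add ha, show t+(1-t) = (1:ℝ) by ring, Real.rpow_one]; linarith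
    · intro _; rfl
  · have htb : (0:ℝ) < 1 - t := by linarith
    have hsum : t + (1 - t) = 1 := by ring
    have hstrict := strictConcaveOn_log_Ioi.2 (Set.mem_Ioi.2 ha) (Set.mem_Ioi.2 hb) hab
      ht htb hsum
    simp only [smul_eq_mul] at hstrict
    have hlog : Real.log (a ^ t * b ^ (1 - t)) = t * Real.log a + (1 - t) * Real.log b := by
      rw [Real.log_mul (Real.rpow_pos_of_pos ha t).ne' (Real.rpow_pos_of_pos hb (1-t)).ne',
        Real.log_rpow ha, Real.log_rpow hb]
    have hlt : Real.log (a ^ t * b ^ (1 - t)) < Real.log (t * a + (1 - t) * b) := by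
      rw [hlog]; exact hstrict
    have hXpos : 0 < a ^ t * b ^ (1 - t) :=
      mul_pos (Real.rpow_pos_of_pos ha t) (Real.rpow_pos_of_pos hb (1-t))
    have hYpos : 0 < t * a + (1 - t) * b := by nlinarith
    have hlt' : a ^ t * b ^ (1 - t) < t * a + (1 - t) * b := by
      have := Real.exp_lt_exp.2 hlt
      rwa [Real.exp_log hXpos, Real.exp_log hYpos] at this
    exact ⟨hlt'.le, fun h => absurd h hlt'.ne⟩

-- rpow algebra
lemma L_scale {w x y α β : ℝ} (hw : 0 < w) (hx : 0 < x) (hy : 0 < y) (hαβ : α + β = 1) :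
    (w*x)^α * (w*y)^β = w * (x^α * y^β) := by
  have hww : w^α * w^β = w := by rw [← Real.rpow_add hw, hαβ, Real.rpow_one]
  calc (w*x)^α * (w*y)^β = (w^α * w^β) * (x^α * y^β) := by
        rw [Real.mul_rpow hw.le hx.le, Real.mul_rpow hw.le hy.le]; ring
    _ = w * (x^α * y^β) := by rw [hww]

lemma L_unfold {y z N p : ℝ} (hy : 0 < y) (hz : 0 < z) (hN : 0 < N) (hp : 0 < p) :
    (z ^ (N/(N+p)) * y ^ (p/(N+p))) ^ ((N+p)/N) = z * y ^ (p/N) := by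
  have hNp : 0 < N + p := by linarith
  rw [Real.mul_rpow (Real.rpow_nonneg hz.le _) (Real.rpow_nonneg hy.le _),
    ← Real.rpow_mul hz.le, ← Real.rpow_mul hy.le,
    show N/(N+p) * ((N+p)/N) = 1 by field_simp,
    show p/(N+p) * ((N+p)/N) = p/N by field_simp,
    Real.rpow_one]

lemma L_ineq {x y z N p : ℝ} (hx : 0 < x) (hy : 0 < y) (hz : 0 < z) (hN : 0 < N) (hp : 0 < p)
    (h : x ≤ z ^ (N/(N+p)) * y ^ (p/(N+p))) :
    x ^ ((N+p)/N) * y ^ (-(p/N)) ≤ z := by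
  have hNp : 0 < N + p := by linarith
  have hα : (0:ℝ) ≤ (N+p)/N := by positivity
  have h1 : x ^ ((N+p)/N) ≤ z * y ^ (p/N) := by
    rw [← L_unfold hy hz hN hp]
    exact Real.rpow_le_rpow hx.le h hα
  calc x ^ ((N+p)/N) * y ^ (-(p/N)) ≤ (z * y^(p/N)) * y^(-(p/N)) :=
        mul_le_mul_of_nonneg_right h1 (Real.rpow_nonneg hy.le _)
    _ = z := by rw [mul_assoc, ← Real.rpow_add hy]; simp

lemma L_eq {x y z N p : ℝ} (hx : 0 < x) (hy : 0 < y) (hz : 0 < z) (hN : 0 < N) (hp : 0 < p) :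
    z = x ^ ((N+p)/N) * y ^ (-(p/N)) ↔ x = z ^ (N/(N+p)) * y ^ (p/(N+p)) := by
  have hNp : 0 < N + p := by linarith
  constructor
  · intro h
    rw [h, Real.mul_rpow (Real.rpow_nonneg hx.le _) (Real.rpow_nonneg hy.le _),
      ← Real.rpow_mul hx.le, ← Real.rpow_mul hy.le,
      show (N+p)/N * (N/(N+p)) = 1 by field_simp,
      show -(p/N) * (N/(N+p)) = -(p/(N+p)) by field_simp,
      Real.rpow_one, mul_assoc, ← Real.rpow_add hy]
    simp
  · intro h
    rw [h, L_unfold hy hz hN hp, mul_assoc, ← Real.rpow_add hy]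
    simp


end
end DualMinkowskiHelpers

set_option maxHeartbeats 1000000 in
/-- The `L_p` dual Minkowski inequality: for star bodies `K, L` (given by positive continuous
radial functions `ρK, ρL`) and `p > 0`,
`Ṽ₋ₚ(K,L) = (1/n)∫ ρK^{n+p} ρL^{-p} du ≥ V_n(K)^{(n+p)/n} V_n(L)^{-p/n}`,
with equality iff `K` and `L` are dilates. -/
theorem stmt_5 (n : ℕ) (hn : 1 ≤ n) (p : ℝ) (hp : 0 < p)
    (ρK ρL : EuclideanSpace ℝ (Fin n) → ℝ)
    (hKc : ContinuousOn ρK (Metric.sphere (0 : EuclideanSpace ℝ (Fin n)) 1))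
    (hLc : ContinuousOn ρL (Metric.sphere (0 : EuclideanSpace ℝ (Fin n)) 1))
    (hKpos : ∀ u ∈ Metric.sphere (0 : EuclideanSpace ℝ (Fin n)) 1, 0 < ρK u)
    (hLpos : ∀ u ∈ Metric.sphere (0 : EuclideanSpace ℝ (Fin n)) 1, 0 < ρL u) :
    ((1 / (n : ℝ)) * ∫ u in Metric.sphere (0 : EuclideanSpace ℝ (Fin n)) 1,
            ρK u ^ (n : ℕ) ∂μH[(n : ℝ) - 1]) ^ (((n : ℝ) + p) / n) *
        ((1 / (n : ℝ)) * ∫ u in Metric.sphere (0 : EuclideanSpace ℝ (Fin n)) 1,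
            ρL u ^ (n : ℕ) ∂μH[(n : ℝ) - 1]) ^ (-(p / (n : ℝ))) ≤
      (1 / (n : ℝ)) * ∫ u in Metric.sphere (0 : EuclideanSpace ℝ (Fin n)) 1,
          ρK u ^ ((n : ℝ) + p) * ρL u ^ (-p) ∂μH[(n : ℝ) - 1] ∧
    ((1 / (n : ℝ)) * ∫ u in Metric.sphere (0 : EuclideanSpace ℝ (Fin n)) 1,
          ρK u ^ ((n : ℝ) + p) * ρL u ^ (-p) ∂μH[(n : ℝ) - 1] =
        ((1 / (n : ℝ)) * ∫ u in Metric.sphere (0 : EuclideanSpace ℝ (Fin n)) 1,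
            ρK u ^ (n : ℕ) ∂μH[(n : ℝ) - 1]) ^ (((n : ℝ) + p) / n) *
          ((1 / (n : ℝ)) * ∫ u in Metric.sphere (0 : EuclideanSpace ℝ (Fin n)) 1,
              ρL u ^ (n : ℕ) ∂μH[(n : ℝ) - 1]) ^ (-(p / (n : ℝ))) ↔
      ∃ c > (0 : ℝ), ∀ u ∈ Metric.sphere (0 : EuclideanSpace ℝ (Fin n)) 1,
        ρK u = c * ρL u) := by

  obtain ⟨m, rfl⟩ : ∃ m, n = m + 1 := ⟨n - 1, by omega⟩
  have hexp : ((m+1:ℕ):ℝ) - 1 = (m:ℝ) := by push_cast; ring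
  rw [hexp]
  have hN : (0:ℝ) < ((m+1:ℕ):ℝ) := by positivity
  have hNp : (0:ℝ) < ((m+1:ℕ):ℝ) + p := by linarith
  set t : ℝ := ((m+1:ℕ):ℝ) / (((m+1:ℕ):ℝ) + p) with ht_def
  have ht : 0 < t := by positivity
  have ht1 : t < 1 := by rw [ht_def, div_lt_one hNp]; linarith
  have h1t : 1 - t = p / (((m+1:ℕ):ℝ) + p) := by rw [ht_def]; field_simp; ring
  -- continuity of integrands
  have hKn : ContinuousOn (fun u => ρK u ^ (m+1 : ℕ))
      (Metric.sphere (0 : EuclideanSpace ℝ (Fin (m+1))) 1) := hKc.pow _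
  have hLn : ContinuousOn (fun u => ρL u ^ (m+1 : ℕ))
      (Metric.sphere (0 : EuclideanSpace ℝ (Fin (m+1))) 1) := hLc.pow _
  have hmix : ContinuousOn (fun u => ρK u ^ (((m+1:ℕ):ℝ) + p) * ρL u ^ (-p))
      (Metric.sphere (0 : EuclideanSpace ℝ (Fin (m+1))) 1) :=
    (hKc.rpow_const (fun x hx => Or.inl (hKpos x hx).ne')).mul
      (hLc.rpow_const (fun x hx => Or.inl (hLpos x hx).ne'))
  set KK := ∫ u in Metric.sphere (0 : EuclideanSpace ℝ (Fin (m+1))) 1,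
    ρK u ^ (m+1 : ℕ) ∂μH[(m:ℝ)] with hKK_def
  set JJ := ∫ u in Metric.sphere (0 : EuclideanSpace ℝ (Fin (m+1))) 1,
    ρL u ^ (m+1 : ℕ) ∂μH[(m:ℝ)] with hJJ_def
  set II := ∫ u in Metric.sphere (0 : EuclideanSpace ℝ (Fin (m+1))) 1,
    ρK u ^ (((m+1:ℕ):ℝ) + p) * ρL u ^ (-p) ∂μH[(m:ℝ)] with hII_def
  have hKKpos : 0 < KK :=
    integral_pos_sphere hKn (fun u hu => pow_pos (hKpos u hu) _)
  have hJJpos : 0 < JJ :=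
    integral_pos_sphere hLn (fun u hu => pow_pos (hLpos u hu) _)
  have hIIpos : 0 < II :=
    integral_pos_sphere hmix (fun u hu =>
      mul_pos (Real.rpow_pos_of_pos (hKpos u hu) _) (Real.rpow_pos_of_pos (hLpos u hu) _))
  have hDpos : 0 < II ^ t * JJ ^ (1 - t) :=
    mul_pos (Real.rpow_pos_of_pos hIIpos _) (Real.rpow_pos_of_pos hJJpos _)
  -- pointwise AM-GM identity
  have hpoint : ∀ u ∈ Metric.sphere (0 : EuclideanSpace ℝ (Fin (m+1))) 1,
      ((ρK u ^ (((m+1:ℕ):ℝ) + p) * ρL u ^ (-p)) / II) ^ t * ((ρL u ^ (m+1 : ℕ)) / JJ) ^ (1-t)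
        = (ρK u ^ (m+1 : ℕ)) / (II ^ t * JJ ^ (1-t)) := by
    intro u hu
    have hK := hKpos u hu
    have hL := hLpos u hu
    have hLL : ρL u ^ (-(((m+1:ℕ):ℝ)*(1-t))) * ρL u ^ (((m+1:ℕ):ℝ)*(1-t)) = 1 := by
      rw [← Real.rpow_add hL]; simp
    rw [Real.div_rpow (by positivity) hIIpos.le, Real.div_rpow (by positivity) hJJpos.le,
      Real.mul_rpow (by positivity) (by positivity),
      ← Real.rpow_natCast (ρL u) (m+1), ← Real.rpow_natCast (ρK u) (m+1),
      ← Real.rpow_mul hK.le, ← Real.rpow_mul hL.le, ← Real.rpow_mul hL.le,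
      show (((m+1:ℕ):ℝ) + p) * t = ((m+1:ℕ):ℝ) by rw [ht_def]; field_simp,
      show (-p) * t = -(((m+1:ℕ):ℝ)*(1-t)) by rw [h1t, ht_def]; ring]
    calc ρK u ^ (((m+1:ℕ):ℝ)) * ρL u ^ (-(((m+1:ℕ):ℝ)*(1-t))) / II ^ t *
          (ρL u ^ (((m+1:ℕ):ℝ)*(1-t)) / JJ ^ (1-t))
        = (ρK u ^ (((m+1:ℕ):ℝ)) / (II ^ t * JJ ^ (1-t))) *
          (ρL u ^ (-(((m+1:ℕ):ℝ)*(1-t))) * ρL u ^ (((m+1:ℕ):ℝ)*(1-t))) := by ring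
      _ = ρK u ^ (((m+1:ℕ):ℝ)) / (II ^ t * JJ ^ (1-t)) := by rw [hLL, mul_one]
  -- the deficit function G
  set G : EuclideanSpace ℝ (Fin (m+1)) → ℝ := fun u =>
    t * ((ρK u ^ (((m+1:ℕ):ℝ) + p) * ρL u ^ (-p)) / II) + (1-t) * ((ρL u ^ (m+1 : ℕ)) / JJ)
      - (ρK u ^ (m+1 : ℕ)) / (II ^ t * JJ ^ (1-t)) with hG_def
  have hGcont : ContinuousOn G (Metric.sphere (0 : EuclideanSpace ℝ (Fin (m+1))) 1) :=
    ((continuousOn_const.mul (hmix.div_const _)).add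
      (continuousOn_const.mul (hLn.div_const _))).sub (hKn.div_const _)
  have hApos : ∀ u ∈ Metric.sphere (0 : EuclideanSpace ℝ (Fin (m+1))) 1,
      0 < (ρK u ^ (((m+1:ℕ):ℝ) + p) * ρL u ^ (-p)) / II := fun u hu =>
    div_pos (mul_pos (Real.rpow_pos_of_pos (hKpos u hu) _)
      (Real.rpow_pos_of_pos (hLpos u hu) _)) hIIpos
  have hBpos : ∀ u ∈ Metric.sphere (0 : EuclideanSpace ℝ (Fin (m+1))) 1,
      0 < (ρL u ^ (m+1 : ℕ)) / JJ := fun u hu => div_pos (pow_pos (hLpos u hu) _) hJJpos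
  have hGnonneg : ∀ u ∈ Metric.sphere (0 : EuclideanSpace ℝ (Fin (m+1))) 1, 0 ≤ G u := by
    intro u hu
    have h := (amgm_pair (hApos u hu) (hBpos u hu) ht ht1).1
    rw [hpoint u hu] at h
    simp only [hG_def]
    linarith
  -- integrability
  have hintA : IntegrableOn (fun u => (ρK u ^ (((m+1:ℕ):ℝ) + p) * ρL u ^ (-p)) / II)
      (Metric.sphere (0 : EuclideanSpace ℝ (Fin (m+1))) 1) μH[(m:ℝ)] :=
    integrableOn_sphere (hmix.div_const _)
  have hintB : IntegrableOn (fun u => (ρL u ^ (m+1 : ℕ)) / JJ)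
      (Metric.sphere (0 : EuclideanSpace ℝ (Fin (m+1))) 1) μH[(m:ℝ)] :=
    integrableOn_sphere (hLn.div_const _)
  have hintC : IntegrableOn (fun u => (ρK u ^ (m+1 : ℕ)) / (II ^ t * JJ ^ (1-t)))
      (Metric.sphere (0 : EuclideanSpace ℝ (Fin (m+1))) 1) μH[(m:ℝ)] :=
    integrableOn_sphere (hKn.div_const _)
  -- integral of G
  have hGint : ∫ u in Metric.sphere (0 : EuclideanSpace ℝ (Fin (m+1))) 1, G u ∂μH[(m:ℝ)]
      = 1 - KK / (II ^ t * JJ ^ (1-t)) := by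
    have hintAB : IntegrableOn (fun u =>
        t * ((ρK u ^ (((m+1:ℕ):ℝ) + p) * ρL u ^ (-p)) / II) + (1-t) * ((ρL u ^ (m+1 : ℕ)) / JJ))
        (Metric.sphere (0 : EuclideanSpace ℝ (Fin (m+1))) 1) μH[(m:ℝ)] :=
      (hintA.const_mul t).add (hintB.const_mul (1-t))
    simp only [hG_def]
    rw [MeasureTheory.integral_sub hintAB hintC,
      MeasureTheory.integral_add (hintA.const_mul t) (hintB.const_mul (1-t)),
      MeasureTheory.integral_const_mul, MeasureTheory.integral_const_mul,
      MeasureTheory.integral_div, MeasureTheory.integral_div, MeasureTheory.integral_div,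
      ← hII_def, ← hJJ_def, ← hKK_def, div_self hIIpos.ne', div_self hJJpos.ne']
    ring
  have hG0 : 0 ≤ ∫ u in Metric.sphere (0 : EuclideanSpace ℝ (Fin (m+1))) 1, G u ∂μH[(m:ℝ)] :=
    MeasureTheory.setIntegral_nonneg sphere_meas hGnonneg
  have hkey : KK ≤ II ^ (((m+1:ℕ):ℝ)/(((m+1:ℕ):ℝ)+p)) * JJ ^ (p/(((m+1:ℕ):ℝ)+p)) := by
    rw [← ht_def, ← h1t]
    rw [hGint] at hG0
    exact (div_le_one hDpos).1 (by linarith)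
  constructor
  · -- the inequality
    have h := L_ineq hKKpos hJJpos hIIpos hN hp hkey
    calc ((1/((m+1:ℕ):ℝ)) * KK) ^ ((((m+1:ℕ):ℝ)+p)/((m+1:ℕ):ℝ)) *
          ((1/((m+1:ℕ):ℝ)) * JJ) ^ (-(p/((m+1:ℕ):ℝ)))
        = (1/((m+1:ℕ):ℝ)) * (KK ^ ((((m+1:ℕ):ℝ)+p)/((m+1:ℕ):ℝ)) * JJ ^ (-(p/((m+1:ℕ):ℝ)))) :=
          L_scale (by positivity) hKKpos hJJpos (by field_simp; ring)
      _ ≤ (1/((m+1:ℕ):ℝ)) * II := by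
          apply mul_le_mul_of_nonneg_left h (by positivity)
  · constructor
    · -- equality → dilates
      intro heq
      rw [L_scale (by positivity) hKKpos hJJpos (by field_simp; ring)] at heq
      have hII_eq : II = KK ^ ((((m+1:ℕ):ℝ)+p)/((m+1:ℕ):ℝ)) * JJ ^ (-(p/((m+1:ℕ):ℝ))) :=
        mul_left_cancel₀ (by positivity : (1/((m+1:ℕ):ℝ)) ≠ 0) heq
      have hKK_eq : KK = II ^ (((m+1:ℕ):ℝ)/(((m+1:ℕ):ℝ)+p)) * JJ ^ (p/(((m+1:ℕ):ℝ)+p)) :=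
        (L_eq hKKpos hJJpos hIIpos hN hp).1 hII_eq
      have hKKD : KK = II ^ t * JJ ^ (1-t) := by rw [ht_def, h1t]; exact hKK_eq
      have hGzero : ∫ u in Metric.sphere (0 : EuclideanSpace ℝ (Fin (m+1))) 1, G u ∂μH[(m:ℝ)] = 0 := by
        rw [hGint, hKKD, div_self hDpos.ne']; ring
      have hGz := eq_zero_of_integral_zero_sphere hGcont hGnonneg hGzero
      refine ⟨(II/JJ) ^ ((((m+1:ℕ):ℝ)+p)⁻¹), Real.rpow_pos_of_pos (div_pos hIIpos hJJpos) _, ?_⟩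
      intro u hu
      have hK := hKpos u hu
      have hL := hLpos u hu
      have hab : (ρK u ^ (((m+1:ℕ):ℝ) + p) * ρL u ^ (-p)) / II = (ρL u ^ (m+1 : ℕ)) / JJ := by
        have hg := hGz u hu
        simp only [hG_def] at hg
        have heqamgm := (amgm_pair (hApos u hu) (hBpos u hu) ht ht1).2
        apply heqamgm
        rw [hpoint u hu]
        linarith
      -- derive ρK^{N+p} = (II/JJ) ρL^{N+p}
      have h2 : ρK u ^ (((m+1:ℕ):ℝ) + p) * ρL u ^ (-p) * JJ = ρL u ^ (m+1 : ℕ) * II :=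
        (div_eq_div_iff hIIpos.ne' hJJpos.ne').1 hab
      have hmulp : ρL u ^ (-p) * ρL u ^ p = 1 := by rw [← Real.rpow_add hL]; simp
      have hLNp : ρL u ^ (m+1 : ℕ) * ρL u ^ p = ρL u ^ (((m+1:ℕ):ℝ) + p) := by
        rw [← Real.rpow_natCast (ρL u) (m+1), ← Real.rpow_add hL]
      have hKe : ρK u ^ (((m+1:ℕ):ℝ) + p) = (II/JJ) * ρL u ^ (((m+1:ℕ):ℝ) + p) := by
        have h3 := congrArg (· * ρL u ^ p) h2
        rw [show ρK u ^ (((m+1:ℕ):ℝ) + p) * ρL u ^ (-p) * JJ * ρL u ^ p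
            = ρK u ^ (((m+1:ℕ):ℝ) + p) * (ρL u ^ (-p) * ρL u ^ p) * JJ by ring, hmulp,
          mul_one, show ρL u ^ (m+1 : ℕ) * II * ρL u ^ p
            = ρL u ^ (m+1 : ℕ) * ρL u ^ p * II by ring, hLNp] at h3
        rw [div_mul_eq_mul_div, eq_div_iff hJJpos.ne']
        linarith [h3]
      have h4 := congrArg (fun x : ℝ => x ^ ((((m+1:ℕ):ℝ)+p)⁻¹)) hKe
      rwa [← Real.rpow_mul hK.le, mul_inv_cancel₀ hNp.ne', Real.rpow_one,
        Real.mul_rpow (div_pos hIIpos hJJpos).le (Real.rpow_pos_of_pos hL _).le,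
        ← Real.rpow_mul hL.le, mul_inv_cancel₀ hNp.ne', Real.rpow_one] at h4
    · -- dilates → equality
      rintro ⟨c, hc, hdil⟩
      have hKK_c : KK = c ^ (m+1 : ℕ) * JJ := by
        rw [hKK_def, ← MeasureTheory.integral_const_mul]
        apply MeasureTheory.setIntegral_congr_fun sphere_meas
        intro u hu
        show ρK u ^ (m+1 : ℕ) = c ^ (m+1 : ℕ) * ρL u ^ (m+1 : ℕ)
        rw [hdil u hu, mul_pow]
      have hII_c : II = c ^ (((m+1:ℕ):ℝ) + p) * JJ := by
        rw [hII_def, ← MeasureTheory.integral_const_mul]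
        apply MeasureTheory.setIntegral_congr_fun sphere_meas
        intro u hu
        have hL := hLpos u hu
        show ρK u ^ (((m+1:ℕ):ℝ) + p) * ρL u ^ (-p) = c ^ (((m+1:ℕ):ℝ) + p) * ρL u ^ (m+1 : ℕ)
        rw [hdil u hu, Real.mul_rpow hc.le hL.le, mul_assoc, ← Real.rpow_add hL,
          show (((m+1:ℕ):ℝ) + p) + (-p) = ((m+1:ℕ):ℝ) by ring, Real.rpow_natCast]
      rw [L_scale (by positivity) hKKpos hJJpos (by field_simp; ring), hKK_c, hII_c]
      congr 1
      rw [Real.mul_rpow (by positivity) hJJpos.le,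
        ← Real.rpow_natCast c (m+1), ← Real.rpow_mul hc.le,
        show ((m+1:ℕ):ℝ) * ((((m+1:ℕ):ℝ)+p)/((m+1:ℕ):ℝ)) = ((m+1:ℕ):ℝ) + p by field_simp,
        mul_assoc, ← Real.rpow_add hJJpos,
        show (((m+1:ℕ):ℝ)+p)/((m+1:ℕ):ℝ) + (-(p/((m+1:ℕ):ℝ))) = 1 by field_simp; ring,
        Real.rpow_one]
end

section
/- Mixed volume identity for generalized centroid bodies: if K_1,…,K_{n−1} are convex bodies with nonempty interior, μ an even zonal measure, Γ^μ L defined by h(Γ^μ L,u) = (1/((n+1)V_n(L))) ∫_{S^{n-1}} h(Z^μ(u),v) rho(L,v)^{n+1} dv, and Φ^μ(K_1,…,K_{n−1}) defined by h(Φ^μ(K_1,…,K_{n−1}),u) = ∫_{S^{n-1}} h(Z^μ(v),u) dS(K_1,…,K_{n−1},v), then with L = Φ^{μ,*}(K_1,…,K_{n−1}) one has V(K_1,…,K_{n−1}, Γ^μ L) = 1/(n+1). -/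
open MeasureTheory
open scoped RealInnerProductSpace


open MeasureTheory Metric
open scoped NNReal ENNReal

noncomputable def sphProj (m : ℕ) (x : EuclideanSpace ℝ (Fin (m+1))) : EuclideanSpace ℝ (Fin m) :=
  WithLp.toLp 2 (Fin.init x.ofLp)

lemma sphProj_lipschitz (m : ℕ) : LipschitzWith 1 (sphProj m) := by
  apply LipschitzWith.of_dist_le_mul
  intro x y
  rw [NNReal.coe_one, one_mul, EuclideanSpace.dist_eq, EuclideanSpace.dist_eq]
  apply Real.sqrt_le_sqrt
  rw [Fin.sum_univ_castSucc]
  exact le_add_of_nonneg_right (by positivity)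

lemma norm_init_le (m : ℕ) (x : EuclideanSpace ℝ (Fin (m+1))) :
    ‖sphProj m x‖ ^ 2 + x (Fin.last m) ^ 2 = ‖x‖ ^ 2 := by
  rw [EuclideanSpace.norm_eq, EuclideanSpace.norm_eq,
    Real.sq_sqrt (by positivity), Real.sq_sqrt (by positivity)]
  rw [Fin.sum_univ_castSucc (f := fun i => ‖x i‖ ^ 2)]
  simp [sphProj, Fin.init, Real.norm_eq_abs, sq_abs]

noncomputable def esnoc (m : ℕ) (y : EuclideanSpace ℝ (Fin m)) (a : ℝ) :
    EuclideanSpace ℝ (Fin (m+1)) :=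
  WithLp.toLp 2 (Fin.snoc (α := fun _ => ℝ) y.ofLp a)

noncomputable def sphLift (m : ℕ) (y : EuclideanSpace ℝ (Fin m)) : EuclideanSpace ℝ (Fin (m+1)) :=
  esnoc m y (Real.sqrt (1 - ‖y‖ ^ 2))

lemma sphProj_sphLift (m : ℕ) (y : EuclideanSpace ℝ (Fin m)) : sphProj m (sphLift m y) = y := by
  ext i
  simp [sphProj, sphLift, esnoc, Fin.init]

lemma sphLift_last (m : ℕ) (y : EuclideanSpace ℝ (Fin m)) :
    sphLift m y (Fin.last m) = Real.sqrt (1 - ‖y‖ ^ 2) := by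
  simp [sphLift, esnoc]

lemma sphLift_mem (m : ℕ) (y : EuclideanSpace ℝ (Fin m)) (hy : ‖y‖ ≤ 1) :
    sphLift m y ∈ sphere (0 : EuclideanSpace ℝ (Fin (m+1))) 1 := by
  have h0 : (0:ℝ) ≤ 1 - ‖y‖ ^ 2 := by nlinarith [norm_nonneg y]
  have h := norm_init_le m (sphLift m y)
  rw [sphProj_sphLift, sphLift_last, Real.sq_sqrt h0] at h
  have : ‖sphLift m y‖ ^ 2 = 1 := by linarith
  have hn : ‖sphLift m y‖ = 1 := by nlinarith [norm_nonneg (sphLift m y)]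
  simpa [mem_sphere_iff_norm] using hn

lemma hausdorff_sphere_pos (m : ℕ) :
    0 < μH[(m:ℝ)] (sphere (0 : EuclideanSpace ℝ (Fin (m+1))) 1) := by
  have hsub : closedBall (0 : EuclideanSpace ℝ (Fin m)) 1 ⊆
      sphProj m '' sphere (0 : EuclideanSpace ℝ (Fin (m+1))) 1 := by
    intro y hy
    exact ⟨sphLift m y, sphLift_mem m y (by simpa [mem_closedBall] using hy),
      sphProj_sphLift m y⟩
  have hball : 0 < μH[(m:ℝ)] (closedBall (0 : EuclideanSpace ℝ (Fin m)) 1) := by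
    have : (m : ℝ) = Module.finrank ℝ (EuclideanSpace ℝ (Fin m)) := by
      simp [finrank_euclideanSpace_fin]
    rw [this]
    exact lt_of_lt_of_le
      ((isOpen_ball (x := (0 : EuclideanSpace ℝ (Fin m))) (ε := 1)).measure_pos _
        (nonempty_ball.2 one_pos))
      (measure_mono ball_subset_closedBall)
  calc 0 < μH[(m:ℝ)] (closedBall (0 : EuclideanSpace ℝ (Fin m)) 1) := hball
    _ ≤ μH[(m:ℝ)] (sphProj m '' sphere (0 : EuclideanSpace ℝ (Fin (m+1))) 1) :=
        measure_mono hsub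
    _ ≤ (1:ℝ≥0) ^ (m:ℝ) * μH[(m:ℝ)] (sphere (0 : EuclideanSpace ℝ (Fin (m+1))) 1) :=
        (sphProj_lipschitz m).hausdorffMeasure_image_le (by positivity) _
    _ = μH[(m:ℝ)] (sphere (0 : EuclideanSpace ℝ (Fin (m+1))) 1) := by simp

lemma dist_snoc (m : ℕ) (y z : EuclideanSpace ℝ (Fin m)) (a b : ℝ) :
    dist (esnoc m y a) (esnoc m z b) ^ 2 = dist y z ^ 2 + (a - b) ^ 2 := by
  rw [EuclideanSpace.dist_eq, EuclideanSpace.dist_eq,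
    Real.sq_sqrt (by positivity), Real.sq_sqrt (by positivity)]
  rw [Fin.sum_univ_castSucc
    (f := fun i => dist (esnoc m y a i) (esnoc m z b i) ^ 2)]
  simp [esnoc, Real.dist_eq, sq_abs]

lemma sqrt_diff_le_s13 (c : ℝ) (hc : 0 < c) (p q : ℝ) (hp : c^2 ≤ p) (hq : c^2 ≤ q)
    (d : ℝ) (hd : |p - q| ≤ 2 * d) :
    |Real.sqrt p - Real.sqrt q| ≤ d / c := by
  have hp0 : (0:ℝ) ≤ p := le_trans (by positivity) hp
  have hq0 : (0:ℝ) ≤ q := le_trans (by positivity) hq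
  have hsp : c ≤ Real.sqrt p := by
    rw [show c = Real.sqrt (c^2) by rw [Real.sqrt_sq hc.le]]
    exact Real.sqrt_le_sqrt hp
  have hsq : c ≤ Real.sqrt q := by
    rw [show c = Real.sqrt (c^2) by rw [Real.sqrt_sq hc.le]]
    exact Real.sqrt_le_sqrt hq
  have key : |Real.sqrt p - Real.sqrt q| * (Real.sqrt p + Real.sqrt q) = |p - q| := by
    rw [← abs_of_nonneg (by positivity : (0:ℝ) ≤ Real.sqrt p + Real.sqrt q), ← abs_mul]
    congr 1
    have := Real.sq_sqrt hp0
    have := Real.sq_sqrt hq0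
    nlinarith
  have h2 : |Real.sqrt p - Real.sqrt q| * (2 * c) ≤ 2 * d := by
    calc |Real.sqrt p - Real.sqrt q| * (2 * c)
        ≤ |Real.sqrt p - Real.sqrt q| * (Real.sqrt p + Real.sqrt q) := by
          apply mul_le_mul_of_nonneg_left (by linarith) (abs_nonneg _)
      _ = |p - q| := key
      _ ≤ 2 * d := hd
  rw [le_div_iff₀ hc]
  nlinarith [abs_nonneg (Real.sqrt p - Real.sqrt q)]

lemma esnoc_init (m : ℕ) (x : EuclideanSpace ℝ (Fin (m+1))) :
    esnoc m (sphProj m x) (x (Fin.last m)) = x :=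
  congrArg (WithLp.toLp 2) (Fin.snoc_init_self (α := fun _ => ℝ) x.ofLp)

noncomputable def sphG (m : ℕ) (y : EuclideanSpace ℝ (Fin m)) : EuclideanSpace ℝ (Fin (m+1)) :=
  esnoc m y (Real.sqrt (1 - ‖y‖ ^ 2))

lemma sphG_lipschitzOn (m : ℕ) (c : ℝ) (hc : 0 < c) :
    LipschitzOnWith ((1 + 1/c).toNNReal) (sphG m)
      {y : EuclideanSpace ℝ (Fin m) | ‖y‖ ^ 2 ≤ 1 - c ^ 2} := by
  apply LipschitzOnWith.of_dist_le_mul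
  intro y hy z hz
  simp only [Set.mem_setOf_eq] at hy hz
  have hy1 : ‖y‖ ≤ 1 := by nlinarith [norm_nonneg y]
  have hz1 : ‖z‖ ≤ 1 := by nlinarith [norm_nonneg z]
  have habs : |(1 - ‖y‖ ^ 2) - (1 - ‖z‖ ^ 2)| ≤ 2 * dist y z := by
    have h1 : |‖z‖ - ‖y‖| ≤ ‖z - y‖ := abs_norm_sub_norm_le z y
    have h2 : ‖z - y‖ = dist y z := by rw [dist_comm, dist_eq_norm]
    have h3 : (1 - ‖y‖ ^ 2) - (1 - ‖z‖ ^ 2) = (‖z‖ - ‖y‖) * (‖z‖ + ‖y‖) := by ring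
    rw [h3, abs_mul, abs_of_nonneg (by positivity : (0:ℝ) ≤ ‖z‖ + ‖y‖)]
    calc |‖z‖ - ‖y‖| * (‖z‖ + ‖y‖) ≤ dist y z * 2 := by
          apply mul_le_mul (by rw [← h2]; exact h1) (by linarith) (by positivity) dist_nonneg
      _ = 2 * dist y z := by ring
  have hg : |Real.sqrt (1 - ‖y‖ ^ 2) - Real.sqrt (1 - ‖z‖ ^ 2)| ≤ dist y z / c :=
    sqrt_diff_le_s13 c hc _ _ (by linarith) (by linarith) _ habs
  have hsq := dist_snoc m y z (Real.sqrt (1 - ‖y‖ ^ 2)) (Real.sqrt (1 - ‖z‖ ^ 2))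
  have hKd : dist (sphG m y) (sphG m z) ^ 2 ≤ ((1 + 1/c) * dist y z) ^ 2 := by
    rw [show sphG m y = esnoc m y (Real.sqrt (1 - ‖y‖ ^ 2)) from rfl,
      show sphG m z = esnoc m z (Real.sqrt (1 - ‖z‖ ^ 2)) from rfl, hsq]
    have h4 : (Real.sqrt (1 - ‖y‖ ^ 2) - Real.sqrt (1 - ‖z‖ ^ 2)) ^ 2 ≤ (dist y z / c) ^ 2 := by
      rw [← sq_abs]
      exact pow_le_pow_left₀ (abs_nonneg _) hg 2
    have hc' : 0 < c := hc
    have hd := dist_nonneg (x := y) (y := z)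
    rw [div_pow] at h4
    have h5 : (0:ℝ) ≤ dist y z ^ 2 / c := by positivity
    have e1 : ((1 + 1/c) * dist y z) ^ 2
        = dist y z ^ 2 + 2 * (dist y z ^ 2 / c) + dist y z ^ 2 / c ^ 2 := by
      field_simp; ring
    linarith [h4, h5]
  have hK0 : (0:ℝ) ≤ (1 + 1/c) * dist y z := by positivity
  have := dist_nonneg (x := sphG m y) (y := sphG m z)
  calc dist (sphG m y) (sphG m z) ≤ (1 + 1/c) * dist y z := by nlinarith
    _ = ((1 + 1/c).toNNReal : ℝ) * dist y z := by
        rw [Real.coe_toNNReal _ (by positivity : (0:ℝ) ≤ 1 + 1/c)]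

lemma hausdorff_closedBall_lt_top (m : ℕ) :
    μH[(m:ℝ)] (closedBall (0 : EuclideanSpace ℝ (Fin m)) 1) < ⊤ := by
  have : (m : ℝ) = Module.finrank ℝ (EuclideanSpace ℝ (Fin m)) := by
    simp [finrank_euclideanSpace_fin]
  rw [this]
  exact (isCompact_closedBall (0 : EuclideanSpace ℝ (Fin m)) 1).measure_lt_top

lemma hausdorff_Alast_lt_top (m : ℕ) (c : ℝ) (hc : 0 < c) (hc1 : c ≤ 1) :
    μH[(m:ℝ)] {x : EuclideanSpace ℝ (Fin (m+1)) |
      x ∈ sphere (0 : EuclideanSpace ℝ (Fin (m+1))) 1 ∧ c ≤ x (Fin.last m)} < ⊤ := by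
  set A := {x : EuclideanSpace ℝ (Fin (m+1)) |
      x ∈ sphere (0 : EuclideanSpace ℝ (Fin (m+1))) 1 ∧ c ≤ x (Fin.last m)}
  set D := {y : EuclideanSpace ℝ (Fin m) | ‖y‖ ^ 2 ≤ 1 - c ^ 2}
  have hAG : A ⊆ sphG m '' D := by
    rintro x ⟨hx, hxc⟩
    have hx1 : ‖x‖ = 1 := by simpa [mem_sphere_iff_norm] using hx
    have hni := norm_init_le m x
    rw [hx1] at hni
    refine ⟨sphProj m x, ?_, ?_⟩
    · show ‖sphProj m x‖ ^ 2 ≤ 1 - c ^ 2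
      nlinarith [hxc, hc]
    · show esnoc m (sphProj m x) (Real.sqrt (1 - ‖sphProj m x‖ ^ 2)) = x
      have h7 : 1 - ‖sphProj m x‖ ^ 2 = x (Fin.last m) ^ 2 := by linarith
      rw [h7, Real.sqrt_sq (by linarith)]
      exact esnoc_init m x
  have hDB : D ⊆ closedBall (0 : EuclideanSpace ℝ (Fin m)) 1 := by
    intro y hy
    have : ‖y‖ ^ 2 ≤ 1 - c ^ 2 := hy
    simp only [mem_closedBall, dist_zero_right]
    nlinarith [norm_nonneg y]
  calc μH[(m:ℝ)] A ≤ μH[(m:ℝ)] (sphG m '' D) := measure_mono hAG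
    _ ≤ (((1 + 1/c).toNNReal : ℝ≥0) : ℝ≥0∞) ^ (m:ℝ) * μH[(m:ℝ)] D :=
        (sphG_lipschitzOn m c hc).hausdorffMeasure_image_le (by positivity)
    _ < ⊤ := by
        apply ENNReal.mul_lt_top
        · exact ENNReal.rpow_lt_top_of_nonneg (by positivity) ENNReal.coe_ne_top
        · exact lt_of_le_of_lt (measure_mono hDB) (hausdorff_closedBall_lt_top m)

lemma hausdorff_sphere_lt_top (m : ℕ) :
    μH[(m:ℝ)] (sphere (0 : EuclideanSpace ℝ (Fin (m+1))) 1) < ⊤ := by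
  classical
  set c : ℝ := 1 / (m + 1) with hcdef
  have hc : 0 < c := by positivity
  have hc1 : c ≤ 1 := by
    rw [hcdef]
    rw [div_le_one (by positivity)]
    exact_mod_cast Nat.le_add_left 1 m
  set A : Fin (m+1) → Set (EuclideanSpace ℝ (Fin (m+1))) := fun i =>
    {x | x ∈ sphere (0 : EuclideanSpace ℝ (Fin (m+1))) 1 ∧ c ≤ x i}
  set B : Fin (m+1) → Set (EuclideanSpace ℝ (Fin (m+1))) := fun i =>
    {x | x ∈ sphere (0 : EuclideanSpace ℝ (Fin (m+1))) 1 ∧ c ≤ -(x i)}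
  -- covering
  have hcover : sphere (0 : EuclideanSpace ℝ (Fin (m+1))) 1 ⊆ ⋃ i, (A i ∪ B i) := by
    intro x hx
    have hx1 : ‖x‖ = 1 := by simpa [mem_sphere_iff_norm] using hx
    have hsum : ∑ i, x i ^ 2 = 1 := by
      have := EuclideanSpace.norm_eq x
      rw [hx1] at this
      have h2 : Real.sqrt (∑ i, ‖x i‖ ^ 2) = 1 := this.symm
      have h3 : ∑ i, ‖x i‖ ^ 2 = 1 := by
        have h4 := congrArg (· ^ 2) h2
        simp only [Real.sq_sqrt (by positivity : (0:ℝ) ≤ ∑ i, ‖x i‖ ^ 2), one_pow] at h4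
        exact h4
      simpa [Real.norm_eq_abs, sq_abs] using h3
    have hex : ∃ i, c ≤ |x i| := by
      by_contra hno
      push_neg at hno
      have hlt : ∀ i, x i ^ 2 < c ^ 2 := by
        intro i
        have := hno i
        nlinarith [abs_nonneg (x i), sq_abs (x i)]
      have hstrict : ∑ i, x i ^ 2 < ∑ _i : Fin (m+1), c ^ 2 :=
        Finset.sum_lt_sum_of_nonempty ⟨0, Finset.mem_univ 0⟩ (fun i _ => hlt i)
      rw [Finset.sum_const, Finset.card_univ, Fintype.card_fin] at hstrict
      have : ((m:ℝ)+1) * c ^ 2 = c := by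
        rw [hcdef]; field_simp
      rw [hsum] at hstrict
      have : (1:ℝ) < c := by
        calc (1:ℝ) < (m+1 : ℕ) • c ^ 2 := hstrict
          _ = ((m:ℝ)+1) * c ^ 2 := by push_cast [nsmul_eq_mul]; ring
          _ = c := this
      linarith
    obtain ⟨i, hi⟩ := hex
    rcases abs_cases (x i) with ⟨he, _⟩ | ⟨he, _⟩
    · exact Set.mem_iUnion.2 ⟨i, Or.inl ⟨hx, by rw [← he]; exact hi⟩⟩
    · exact Set.mem_iUnion.2 ⟨i, Or.inr ⟨hx, by rw [he] at hi; exact hi⟩⟩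
  -- B i is the image of A i under negation
  have hB : ∀ i, B i = (fun x => -x) '' A i := by
    intro i
    ext x
    constructor
    · rintro ⟨hx, hxc⟩
      refine ⟨-x, ⟨?_, ?_⟩, by simp⟩
      · simpa [mem_sphere_iff_norm] using hx
      · simpa using hxc
    · rintro ⟨z, ⟨hz, hzc⟩, rfl⟩
      exact ⟨by simpa [mem_sphere_iff_norm] using hz, by simpa using hzc⟩
  have hBA : ∀ i, μH[(m:ℝ)] (B i) = μH[(m:ℝ)] (A i) := by
    intro i
    rw [hB i]
    exact Isometry.hausdorffMeasure_image isometry_neg (Or.inl (by positivity)) _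
  -- A i is an isometric image of A (last)
  have hAi : ∀ i, μH[(m:ℝ)] (A i) = μH[(m:ℝ)] (A (Fin.last m)) := by
    intro i
    set e := Equiv.swap i (Fin.last m)
    set T := LinearIsometryEquiv.piLpCongrLeft 2 ℝ ℝ e
    have hT : ∀ (x : EuclideanSpace ℝ (Fin (m+1))) j, T x j = x (e j) := by
      intro x j
      rw [LinearIsometryEquiv.piLpCongrLeft_apply]
      simp [Equiv.piCongrLeft'_apply, e, Equiv.symm_swap]
    have him : A i = T '' A (Fin.last m) := by
      ext x
      constructor
      · rintro ⟨hx, hxc⟩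
        refine ⟨T.symm x, ⟨?_, ?_⟩, T.apply_symm_apply x⟩
        · have : ‖T.symm x‖ = ‖x‖ := T.symm.norm_map x
          simp only [mem_sphere_iff_norm, sub_zero] at hx ⊢
          rw [this, hx]
        · have h1 : T (T.symm x) = x := T.apply_symm_apply x
          have h2 : T (T.symm x) i = (T.symm x) (e i) := hT _ i
          rw [h1] at h2
          have h3 : e i = Fin.last m := Equiv.swap_apply_left i (Fin.last m)
          rw [h3] at h2
          rw [← h2]; exact hxc
      · rintro ⟨z, ⟨hz, hzc⟩, rfl⟩
        refine ⟨?_, ?_⟩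
        · have : ‖T z‖ = ‖z‖ := T.norm_map z
          simp only [mem_sphere_iff_norm, sub_zero] at hz ⊢
          rw [this, hz]
        · have h2 : T z i = z (e i) := hT z i
          rw [Equiv.swap_apply_left i (Fin.last m)] at h2
          rw [h2]; exact hzc
    rw [him]
    exact Isometry.hausdorffMeasure_image T.isometry (Or.inl (by positivity)) _
  have hlast : μH[(m:ℝ)] (A (Fin.last m)) < ⊤ := hausdorff_Alast_lt_top m c hc hc1
  calc μH[(m:ℝ)] (sphere (0 : EuclideanSpace ℝ (Fin (m+1))) 1)
      ≤ μH[(m:ℝ)] (⋃ i, (A i ∪ B i)) := measure_mono hcover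
    _ ≤ ∑' i, μH[(m:ℝ)] (A i ∪ B i) := measure_iUnion_le _
    _ ≤ ∑' (_i : Fin (m+1)), 2 * μH[(m:ℝ)] (A (Fin.last m)) := by
        apply ENNReal.tsum_le_tsum
        intro i
        calc μH[(m:ℝ)] (A i ∪ B i) ≤ μH[(m:ℝ)] (A i) + μH[(m:ℝ)] (B i) := measure_union_le _ _
          _ = 2 * μH[(m:ℝ)] (A (Fin.last m)) := by rw [hBA i, hAi i, two_mul]
    _ < ⊤ := by
        rw [tsum_fintype]
        simp only [Finset.sum_const, Finset.card_univ, Fintype.card_fin]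
        have h2 : 2 * μH[(m:ℝ)] (A (Fin.last m)) < ⊤ := ENNReal.mul_lt_top (by norm_num) hlast
        rw [nsmul_eq_mul]
        exact ENNReal.mul_lt_top (by simp) h2


/-- Mixed volume identity for generalized centroid bodies.  Here `μS` stands for the mixed
area measure `S(K₁,…,K_{n-1},·)` of convex bodies with nonempty interior (a finite measure on
the sphere, not concentrated on a great subsphere), so that the mixed volume is
`V(K₁,…,K_{n-1},M) = (1/n)∫ h(M,u) dμS(u)`; `hZ v u = h(Z^μ(v),u)` are the symmetric support
functions of the zonoids generated by an even zonal measure `μ`;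
`hΦ = h(Φ^μ(K₁,…,K_{n-1}),·)`, `ρL = ρ(Φ^{μ,*}(K₁,…,K_{n-1}),·) = 1/hΦ`, `VL = V_n(L)` and
`hΓ = h(Γ^μ L,·)`.  Then `V(K₁,…,K_{n-1},Γ^μ L) = 1/(n+1)`. -/
theorem stmt_13 (n : ℕ) (hn : 1 ≤ n)
    (μS : Measure (EuclideanSpace ℝ (Fin n))) [IsFiniteMeasure μS]
    (hSsupp : μS (Metric.sphere (0 : EuclideanSpace ℝ (Fin n)) 1)ᶜ = 0)
    (hSgreat : ∀ w : EuclideanSpace ℝ (Fin n), w ≠ 0 →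
      μS {v : EuclideanSpace ℝ (Fin n) | ⟪w, v⟫ = 0} ≠ μS Set.univ)
    (hZ : EuclideanSpace ℝ (Fin n) → EuclideanSpace ℝ (Fin n) → ℝ)
    (hZc : Continuous fun q : EuclideanSpace ℝ (Fin n) × EuclideanSpace ℝ (Fin n) => hZ q.1 q.2)
    (hZsymm : ∀ u v, hZ u v = hZ v u)
    (hZnonneg : ∀ u v, 0 ≤ hZ u v)
    (hΦ : EuclideanSpace ℝ (Fin n) → ℝ) (hΦdef : ∀ u, hΦ u = ∫ v, hZ v u ∂μS)
    (hΦpos : ∀ u ∈ Metric.sphere (0 : EuclideanSpace ℝ (Fin n)) 1, 0 < hΦ u)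
    (ρL : EuclideanSpace ℝ (Fin n) → ℝ) (hρL : ∀ u, ρL u = (hΦ u)⁻¹)
    (VL : ℝ) (hVL : VL = (1 / (n : ℝ)) *
      ∫ u in Metric.sphere (0 : EuclideanSpace ℝ (Fin n)) 1, ρL u ^ n ∂μH[(n : ℝ) - 1])
    (hΓ : EuclideanSpace ℝ (Fin n) → ℝ)
    (hΓdef : ∀ u, hΓ u = (1 / (((n : ℝ) + 1) * VL)) *
      ∫ v in Metric.sphere (0 : EuclideanSpace ℝ (Fin n)) 1,
        hZ u v * ρL v ^ (n + 1) ∂μH[(n : ℝ) - 1]) :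
    (1 / (n : ℝ)) * ∫ u, hΓ u ∂μS = 1 / ((n : ℝ) + 1) := by
  
  obtain ⟨m, rfl⟩ : ∃ m, n = m + 1 := ⟨n - 1, by omega⟩
  clear hn
  set S := Metric.sphere (0 : EuclideanSpace ℝ (Fin (m+1))) 1 with hSdef
  rw [show ((m+1 : ℕ) : ℝ) - 1 = (m : ℝ) by push_cast; ring] at hVL hΓdef
  set nn : ℝ := ((m+1 : ℕ) : ℝ) with hnn
  have hnn0 : (0:ℝ) < nn := by rw [hnn]; positivity
  set σ := (μH[(m:ℝ)] : Measure (EuclideanSpace ℝ (Fin (m+1)))).restrict S with hσdef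
  have hSmeas : MeasurableSet S := Metric.isClosed_sphere.measurableSet
  have hSpos : 0 < μH[(m:ℝ)] S := hausdorff_sphere_pos m
  have hSfin : μH[(m:ℝ)] S < ⊤ := hausdorff_sphere_lt_top m
  haveI : IsFiniteMeasure σ := ⟨by
    rw [hσdef, Measure.restrict_apply_univ]; exact hSfin⟩
  -- a.e. membership
  have hae1 : ∀ᵐ u ∂μS, u ∈ S := by
    rw [ae_iff, ← Set.compl_def]
    exact hSsupp
  have hae2 : ∀ᵐ v ∂σ, v ∈ S := by
    rw [hσdef, ae_restrict_iff' hSmeas]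
    exact Filter.Eventually.of_forall fun v hv => hv
  -- bound for hZ on S × S
  obtain ⟨M, hM⟩ := (isCompact_sphere (0 : EuclideanSpace ℝ (Fin (m+1))) 1 |>.prod
    (isCompact_sphere (0 : EuclideanSpace ℝ (Fin (m+1))) 1)).exists_bound_of_continuousOn
    hZc.continuousOn
  -- continuity of hΦ
  have hΦfun : hΦ = fun u => ∫ v, hZ v u ∂μS := funext hΦdef
  have hΦcont : Continuous hΦ := by
    rw [hΦfun, continuous_iff_continuousAt]
    intro u₀
    obtain ⟨C, hC⟩ := (isCompact_sphere (0 : EuclideanSpace ℝ (Fin (m+1))) 1 |>.prod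
      (isCompact_closedBall u₀ 1)).exists_bound_of_continuousOn hZc.continuousOn
    apply continuousAt_of_dominated (bound := fun _ => C)
    · exact Filter.Eventually.of_forall fun u =>
        ((hZc.comp (continuous_id.prodMk continuous_const)).aestronglyMeasurable)
    · filter_upwards [Metric.closedBall_mem_nhds u₀ one_pos] with u hu
      filter_upwards [hae1] with v hv
      exact hC (v, u) ⟨hv, hu⟩
    · exact integrable_const C
    · exact Filter.Eventually.of_forall fun v =>
        (hZc.comp (continuous_const.prodMk continuous_id)).continuousAt
  -- min of hΦ on S
  have hSne : S.Nonempty := NormedSpace.sphere_nonempty.mpr zero_le_one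
  obtain ⟨u₀, hu₀S, hmin⟩ := (isCompact_sphere (0 : EuclideanSpace ℝ (Fin (m+1))) 1).exists_isMinOn
    hSne hΦcont.continuousOn
  set ε := hΦ u₀ with hεdef
  have hε : 0 < ε := hΦpos u₀ hu₀S
  have hεle : ∀ u ∈ S, ε ≤ hΦ u := fun u hu => hmin hu
  -- upper bound for hΦ on S
  set B : ℝ := M * (μS Set.univ).toReal with hBdef
  have hBle : ∀ u ∈ S, hΦ u ≤ B := by
    intro u hu
    rw [hΦdef]
    have h1 : ∀ᵐ v ∂μS, ‖hZ v u‖ ≤ M := by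
      filter_upwards [hae1] with v hv
      exact hM (v, u) ⟨hv, hu⟩
    calc ∫ v, hZ v u ∂μS ≤ |∫ v, hZ v u ∂μS| := le_abs_self _
      _ ≤ M * (μS Set.univ).toReal := norm_integral_le_of_norm_le_const h1
  have hεB : ε ≤ B := le_trans (hεle u₀ hu₀S) (hBle u₀ hu₀S)
  have hB : 0 < B := lt_of_lt_of_le hε hεB
  -- bounds for ρL on S
  have hρpos : ∀ v ∈ S, 0 < ρL v := fun v hv => by
    rw [hρL]; exact inv_pos.mpr (hΦpos v hv)
  have hρub : ∀ v ∈ S, ρL v ≤ ε⁻¹ := fun v hv => by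
    rw [hρL]; exact inv_anti₀ hε (hεle v hv)
  have hρlb : ∀ v ∈ S, B⁻¹ ≤ ρL v := fun v hv => by
    rw [hρL]; exact inv_anti₀ (hΦpos v hv) (hBle v hv)
  -- measurability
  have hρmeas : Measurable ρL := by
    have : ρL = fun u => (hΦ u)⁻¹ := funext hρL
    rw [this]; exact hΦcont.measurable.inv
  -- T = ∫ ρL ^ (m+1) over S
  set T : ℝ := ∫ v in S, ρL v ^ (m+1) ∂μH[(m:ℝ)] with hTdef
  have hTσ : T = ∫ v, ρL v ^ (m+1) ∂σ := rfl
  have hint1 : Integrable (fun v => ρL v ^ (m+1)) σ := by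
    refine ⟨((hρmeas.pow_const (m+1)).aestronglyMeasurable), ?_⟩
    apply HasFiniteIntegral.of_bounded (C := ε⁻¹ ^ (m+1))
    filter_upwards [hae2] with v hv
    rw [Real.norm_eq_abs, abs_of_nonneg (pow_nonneg (hρpos v hv).le (m+1))]
    exact pow_le_pow_left₀ (hρpos v hv).le (hρub v hv) (m+1)
  have hTpos : 0 < T := by
    have hconst : ∫ (_ : EuclideanSpace ℝ (Fin (m+1))) in S, B⁻¹ ^ (m+1) ∂μH[(m:ℝ)]
        = (μH[(m:ℝ)] S).toReal • (B⁻¹ ^ (m+1)) := setIntegral_const _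
    have hmono : ∫ (_ : EuclideanSpace ℝ (Fin (m+1))) in S, B⁻¹ ^ (m+1) ∂μH[(m:ℝ)] ≤ T := by
      apply setIntegral_mono_on (integrableOn_const hSfin.ne) hint1 hSmeas
      intro v hv
      exact pow_le_pow_left₀ (by positivity) (hρlb v hv) (m+1)
    have htoReal : 0 < (μH[(m:ℝ)] S).toReal := ENNReal.toReal_pos hSpos.ne' hSfin.ne
    have : 0 < (μH[(m:ℝ)] S).toReal • (B⁻¹ ^ (m+1)) := by
      rw [smul_eq_mul]; positivity
    linarith [hconst ▸ this, hmono]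
  have hVLpos : 0 < VL := by
    rw [hVL]
    have : (0:ℝ) < 1 / nn := by positivity
    exact mul_pos this hTpos
  -- product integrability
  have hprodint : Integrable
      (Function.uncurry fun u v => hZ u v * ρL v ^ (m+1+1)) (μS.prod σ) := by
    constructor
    · exact (hZc.measurable.mul
        ((hρmeas.comp measurable_snd).pow_const (m+1+1))).aestronglyMeasurable
    · apply HasFiniteIntegral.of_bounded (C := M * ε⁻¹ ^ (m+1+1))
      have hfst : ∀ᵐ p : (EuclideanSpace ℝ (Fin (m+1))) × (EuclideanSpace ℝ (Fin (m+1)))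
          ∂μS.prod σ, p.1 ∈ S := by
        rw [ae_iff]
        have : {p : (EuclideanSpace ℝ (Fin (m+1))) × (EuclideanSpace ℝ (Fin (m+1))) |
            ¬ p.1 ∈ S} = Sᶜ ×ˢ Set.univ := by ext p; simp
        rw [this, Measure.prod_prod, hSsupp, zero_mul]
      have hsnd : ∀ᵐ p : (EuclideanSpace ℝ (Fin (m+1))) × (EuclideanSpace ℝ (Fin (m+1)))
          ∂μS.prod σ, p.2 ∈ S := by
        rw [ae_iff]
        have h1 : {p : (EuclideanSpace ℝ (Fin (m+1))) × (EuclideanSpace ℝ (Fin (m+1))) |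
            ¬ p.2 ∈ S} = Set.univ ×ˢ Sᶜ := by ext p; simp
        have h2 : σ Sᶜ = 0 := by
          rw [hσdef, Measure.restrict_apply (hSmeas.compl)]
          simp
        rw [h1, Measure.prod_prod, h2, mul_zero]
      filter_upwards [hfst, hsnd] with p hp1 hp2
      rw [Function.uncurry]
      rw [Real.norm_eq_abs, abs_mul, abs_of_nonneg (hZnonneg _ _),
        abs_of_nonneg (pow_nonneg (hρpos p.2 hp2).le _)]
      have h3 : hZ p.1 p.2 ≤ M := by
        have := hM (p.1, p.2) ⟨hp1, hp2⟩
        rw [Real.norm_eq_abs, abs_of_nonneg (hZnonneg _ _)] at this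
        exact this
      exact mul_le_mul h3 (pow_le_pow_left₀ (hρpos p.2 hp2).le (hρub p.2 hp2) _)
        (pow_nonneg (hρpos p.2 hp2).le _) (le_trans (hZnonneg _ _) h3)
  -- the main computation
  have hkey : ∫ u, hΓ u ∂μS = (1 / ((nn + 1) * VL)) * T := by
    calc ∫ u, hΓ u ∂μS
        = ∫ u, (1 / ((nn + 1) * VL)) *
            (∫ v, hZ u v * ρL v ^ (m+1+1) ∂σ) ∂μS := by
          simp only [hΓdef]
      _ = (1 / ((nn + 1) * VL)) * ∫ u, (∫ v, hZ u v * ρL v ^ (m+1+1) ∂σ) ∂μS :=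
          integral_const_mul _ _
      _ = (1 / ((nn + 1) * VL)) * ∫ v, (∫ u, hZ u v * ρL v ^ (m+1+1) ∂μS) ∂σ := by
          rw [integral_integral_swap hprodint]
      _ = (1 / ((nn + 1) * VL)) * ∫ v, hΦ v * ρL v ^ (m+1+1) ∂σ := by
          congr 1
          apply integral_congr_ae
          apply Filter.Eventually.of_forall
          intro v
          show ∫ u, hZ u v * ρL v ^ (m+1+1) ∂μS = hΦ v * ρL v ^ (m+1+1)
          rw [integral_mul_const, ← hΦdef v]
      _ = (1 / ((nn + 1) * VL)) * T := by
          congr 1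
          rw [hTdef]
          refine setIntegral_congr_fun hSmeas fun v hv => ?_
          have hne : hΦ v ≠ 0 := (hΦpos v hv).ne'
          rw [hρL v]
          field_simp
          rw [pow_succ _ (m+1), ← mul_assoc, mul_comm (hΦ v), mul_assoc, mul_one_div_cancel hne, mul_one]
  rw [hkey]
  have hT' : T = nn * VL := by
    rw [hVL]
    field_simp
  rw [hT']
  have h1 : nn + 1 ≠ 0 := by positivity
  field_simp
end
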